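/- arXiv:1502.05834 — 4 statements merged into one kernel-verified Lean document; each statement's English description precedes it below -/
import Mathlib

section
/- Let L be a normal bimodal logic such that (i) the commutator [K3, K] is contained in L, and (ii) the product 2-frame (ω+1,>) × F is a frame for L, where F is a countably infinite one-step rooted frame. Then L does not have the finite model property. -/
set_option linter.unusedVariables false

/-! ### Unimodal syntax -/

/-- Unimodal formulas: propositional variables, falsum, implication and one box.
Other Booleans and the diamond are defined from these. -/
inductive UForm : Type
  | var : ℕ → UForm
  | bot : UForm
  | imp : UForm → UForm → UForm
  | box : UForm → UForm

namespace UForm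
def neg (φ : UForm) : UForm := imp φ bot
def dia (φ : UForm) : UForm := neg (box (neg φ))
end UForm

/-! ### Bimodal syntax -/

/-- Bimodal formulas: propositional variables, falsum, implication and boxes `□0`, `□1`. -/
inductive BForm : Type
  | var : ℕ → BForm
  | bot : BForm
  | imp : BForm → BForm → BForm
  | box : Fin 2 → BForm → BForm

namespace BForm
def neg (φ : BForm) : BForm := imp φ bot
def top : BForm := neg bot
def and (φ ψ : BForm) : BForm := neg (imp φ (neg ψ))
def or (φ ψ : BForm) : BForm := imp (neg φ) ψ
def dia (i : Fin 2) (φ : BForm) : BForm := neg (box i (neg φ))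

/-- Substitution of formulas for propositional variables. -/
def subst (s : ℕ → BForm) : BForm → BForm
  | var n => s n
  | bot => bot
  | imp φ ψ => imp (subst s φ) (subst s ψ)
  | box i φ => box i (subst s φ)
end BForm

/-- Embedding of unimodal formulas into bimodal ones, reading the unimodal box as `□i`. -/
def UForm.embed (i : Fin 2) : UForm → BForm
  | var n => .var n
  | bot => .bot
  | imp φ ψ => .imp (embed i φ) (embed i ψ)
  | box φ => .box i (embed i φ)

/-! ### Frames and semantics -/

/-- A unimodal Kripke frame: a nonempty set with a binary relation. -/
structure Frame1 : Type 1 where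
  W : Type
  ne : Nonempty W
  R : W → W → Prop

/-- Truth of a unimodal formula at a point of a model based on a unimodal frame. -/
def UTruth (F : Frame1) (V : ℕ → F.W → Prop) : F.W → UForm → Prop
  | w, .var n => V n w
  | _, .bot => False
  | w, .imp φ ψ => UTruth F V w φ → UTruth F V w ψ
  | w, .box φ => ∀ v, F.R w v → UTruth F V v φ

/-- Validity of a unimodal formula in a unimodal frame. -/
def UValid (F : Frame1) (φ : UForm) : Prop := ∀ V w, UTruth F V w φ

/-- `F` is a frame for the set `L` of unimodal formulas. -/
def UFrameFor (F : Frame1) (L : Set UForm) : Prop := ∀ φ ∈ L, UValid F φ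

/-- The unimodal logic determined by a class of unimodal frames. -/
def ULog (C : Set Frame1) : Set UForm := { φ | ∀ F ∈ C, UValid F φ }

/-- The unimodal logic of a single unimodal frame. -/
def LogOf (F : Frame1) : Set UForm := { φ | UValid F φ }

/-- A 2-frame: a nonempty set with two binary relations `R 0` and `R 1`. -/
structure Frame2 : Type 1 where
  W : Type
  ne : Nonempty W
  R : Fin 2 → W → W → Prop

/-- Truth of a bimodal formula at a point of a model based on a 2-frame. -/
def BTruth (F : Frame2) (V : ℕ → F.W → Prop) : F.W → BForm → Prop
  | w, .var n => V n w
  | _, .bot => False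
  | w, .imp φ ψ => BTruth F V w φ → BTruth F V w ψ
  | w, .box i φ => ∀ v, F.R i w v → BTruth F V v φ

/-- Validity of a bimodal formula in a 2-frame. -/
def BValid (F : Frame2) (φ : BForm) : Prop := ∀ V w, BTruth F V w φ

/-- `F` is a frame for the set `L` of bimodal formulas. -/
def FrameFor (F : Frame2) (L : Set BForm) : Prop := ∀ φ ∈ L, BValid F φ

/-! ### Normal bimodal logics -/

/-- `φ` is a propositional tautology: it is true under every assignment of truth values
to formulas that respects `⊥` and `→` (so variables and boxed formulas act as atoms). -/
def BTaut (φ : BForm) : Prop :=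
  ∀ v : BForm → Prop, (¬ v .bot) → (∀ a b, v (.imp a b) ↔ (v a → v b)) → v φ

/-- A normal bimodal logic: contains all propositional tautologies and the K-axioms for
both boxes, and is closed under modus ponens, substitution and necessitation. -/
structure IsLogic (L : Set BForm) : Prop where
  taut : ∀ φ, BTaut φ → φ ∈ L
  kax : ∀ (i : Fin 2) (φ ψ : BForm),
    BForm.imp (.box i (.imp φ ψ)) (.imp (.box i φ) (.box i ψ)) ∈ L
  mp : ∀ φ ψ, BForm.imp φ ψ ∈ L → φ ∈ L → ψ ∈ L
  subst : ∀ φ s, φ ∈ L → BForm.subst s φ ∈ L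
  nec : ∀ (i : Fin 2) (φ : BForm), φ ∈ L → BForm.box i φ ∈ L

/-- The smallest normal bimodal logic containing a given set of bimodal formulas. -/
def SmallestLogic (S : Set BForm) : Set BForm := ⋂₀ { L : Set BForm | IsLogic L ∧ S ⊆ L }

/-- The fusion `L0 ⊕ L1`: the smallest normal bimodal logic containing `L0` (in `□0`)
and `L1` (in `□1`). -/
def Fusion (L0 L1 : Set UForm) : Set BForm :=
  SmallestLogic ((UForm.embed 0 '' L0) ∪ (UForm.embed 1 '' L1))

/-- Left commutativity axiom `□1□0 p → □0□1 p`. -/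
def lcomAx : BForm := .imp (.box 1 (.box 0 (.var 0))) (.box 0 (.box 1 (.var 0)))

/-- Right commutativity axiom `□0□1 p → □1□0 p`. -/
def rcomAx : BForm := .imp (.box 0 (.box 1 (.var 0))) (.box 1 (.box 0 (.var 0)))

/-- Confluence axiom `◇0□1 p → □1◇0 p`. -/
def confAx : BForm := .imp (.dia 0 (.box 1 (.var 0))) (.box 1 (.dia 0 (.var 0)))

/-- The commutator `[L0, L1]`: the smallest normal bimodal logic containing the fusion
together with the two commutativity axioms and the confluence axiom. -/
def Commutator (L0 L1 : Set UForm) : Set BForm :=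
  SmallestLogic ((UForm.embed 0 '' L0) ∪ (UForm.embed 1 '' L1) ∪ {lcomAx, rcomAx, confAx})

/-- `[L0, L1]^lcom`: the smallest normal bimodal logic containing the fusion together
with the left commutativity axiom only. -/
def CommutatorLcom (L0 L1 : Set UForm) : Set BForm :=
  SmallestLogic ((UForm.embed 0 '' L0) ∪ (UForm.embed 1 '' L1) ∪ {lcomAx})

/-- A normal bimodal logic has the finite model property if every bimodal formula not in
`L` fails at some point of a model based on a finite frame for `L`. -/
def HasFMP (L : Set BForm) : Prop :=
  ∀ φ, φ ∉ L → ∃ F : Frame2, Finite F.W ∧ FrameFor F L ∧ ∃ V w, ¬ BTruth F V w φ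

/-! ### Products -/

/-- The product of two unimodal frames. -/
def prodFrame (F0 F1 : Frame1) : Frame2 where
  W := F0.W × F1.W
  ne := F0.ne.elim fun a => F1.ne.elim fun b => ⟨(a, b)⟩
  R := fun i a b =>
    if i = 0 then F0.R a.1 b.1 ∧ a.2 = b.2 else F1.R a.2 b.2 ∧ a.1 = b.1

/-- The product logic `L0 × L1` of two (Kripke complete) unimodal logics: the set of
bimodal formulas valid in every product of a frame for `L0` with a frame for `L1`. -/
def ProdLogic (L0 L1 : Set UForm) : Set BForm :=
  { φ | ∀ F0 F1 : Frame1, UFrameFor F0 L0 → UFrameFor F1 L1 →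
      BValid (prodFrame F0 F1) φ }

/-! ### Relation properties and particular unimodal logics -/

/-- Weak connectedness. -/
def WeaklyConnected {W : Type*} (R : W → W → Prop) : Prop :=
  ∀ x y z, R x y → R x z → y = z ∨ R y z ∨ R z y

/-- Pseudo-transitivity. -/
def PseudoTransitive {W : Type*} (R : W → W → Prop) : Prop :=
  ∀ x y z, R x y → R y z → x = z ∨ R x z

/-- `K`: the unimodal logic determined by all frames. -/
def LogicK : Set UForm := ULog Set.univ

/-- `K3`: the unimodal logic determined by all weakly connected frames. -/
def LogicK3 : Set UForm := ULog { F | WeaklyConnected F.R }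

/-- `K4.3`: the unimodal logic determined by all transitive weakly connected frames. -/
def LogicK43 : Set UForm := ULog { F | Transitive F.R ∧ WeaklyConnected F.R }

/-- `S4.3`: the logic determined by all reflexive transitive weakly connected frames. -/
def LogicS43 : Set UForm :=
  ULog { F | Reflexive F.R ∧ Transitive F.R ∧ WeaklyConnected F.R }

/-- `S5`: the unimodal logic determined by all equivalence frames. -/
def LogicS5 : Set UForm := ULog { F | Equivalence F.R }

/-- `Diff`: the unimodal logic determined by all difference frames `(W, ≠)`. -/
def LogicDiff : Set UForm := ULog { F | ∀ a b, F.R a b ↔ a ≠ b }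

/-- `K4⁻`: the unimodal logic determined by all pseudo-transitive frames. -/
def LogicK4minus : Set UForm := ULog { F | PseudoTransitive F.R }

/-- The frame `(ω + 1, >)` on `{0, 1, 2, …, ω}`. -/
def omegaSuccGt : Frame1 := ⟨WithTop ℕ, ⟨⊤⟩, fun a b => b < a⟩

/-- The difference frame `(ω, ≠)`. -/
def omegaNeq : Frame1 := ⟨ℕ, ⟨0⟩, fun a b => a ≠ b⟩

/-- The frame `(ω, <)`. -/
def omegaLt : Frame1 := ⟨ℕ, ⟨0⟩, fun a b => a < b⟩

/-- The frame `(ω, ≤)`. -/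
def omegaLe : Frame1 := ⟨ℕ, ⟨0⟩, fun a b => a ≤ b⟩

/-- The frame `(ℚ, <)`. -/
def ratLt : Frame1 := ⟨ℚ, ⟨0⟩, fun a b => a < b⟩

/-- A unimodal frame is one-step rooted if some point sees every other point in one step. -/
def OneStepRooted (F : Frame1) : Prop := ∃ r : F.W, ∀ w : F.W, w ≠ r → F.R r w

/-- `F` contains an `(ω + 1, >)`-type chain: there are distinct points `x n` for `n ≤ ω`
such that for `n ≠ m`, `x n` is related to `x m` iff `n > m`. -/
def ContainsOmegaSuccChain (F : Frame1) : Prop :=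
  ∃ x : WithTop ℕ → F.W, Function.Injective x ∧
    ∀ n m : WithTop ℕ, n ≠ m → (F.R (x n) (x m) ↔ m < n)

/-- (lcom) for a 2-frame. -/
def Lcom (F : Frame2) : Prop :=
  ∀ x y z : F.W, F.R 0 x y → F.R 1 y z → ∃ u, F.R 1 x u ∧ F.R 0 u z

/-- (rcom) for a 2-frame. -/
def Rcom (F : Frame2) : Prop :=
  ∀ x y z : F.W, F.R 1 x y → F.R 0 y z → ∃ u, F.R 0 x u ∧ F.R 1 u z

/-- (conf) for a 2-frame. -/
def Conf (F : Frame2) : Prop :=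
  ∀ x y z : F.W, F.R 1 x y → F.R 0 x z → ∃ u, F.R 0 y u ∧ F.R 1 z u

/-!
Take `t` to be the variable `0` and call the length of the longest `R0`-chain from a point its
depth; conf and rcom make depth invariant along `R1`. In a frame for `[K3, K]`, `psi` forces
points of every exact depth `k` among the `R0`-successors of its root `a`, starting from the dead
end given by `◇₀□₀⊥`: from `w` of depth `k`, pass by `R1` to a `t`-point `u` of the same depth,
lift `a R0 w R1 u` by lcom to `a R1 σ R0 u`, and let `x` be an `R0`-minimal `A`-point below `σ`.
Weak connectedness of `R0`, the `X`-conjuncts and the minimality of `x` force `x R0 u` and give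
`x` exact depth `k + 1`; rcom moves `x` back to an `R0`-successor of `a`. Hence `psi` fails in
every finite frame for `L`, while it holds at `(ω, r)` in `(ω + 1, >) × F` when `t` is true
exactly at the points `(n, e n)`, for an injective sequence `e` of `R`-successors of the root `r`.
-/

section Semantics

variable {G : Frame2} {V : ℕ → G.W → Prop} {w : G.W}

@[simp] theorem btruth_imp {φ ψ : BForm} :
    BTruth G V w (.imp φ ψ) ↔ (BTruth G V w φ → BTruth G V w ψ) := Iff.rfl

@[simp] theorem btruth_box {i : Fin 2} {φ : BForm} :
    BTruth G V w (.box i φ) ↔ ∀ v, G.R i w v → BTruth G V v φ := Iff.rfl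

@[simp] theorem btruth_neg {φ : BForm} : BTruth G V w φ.neg ↔ ¬ BTruth G V w φ := Iff.rfl

@[simp] theorem btruth_and {φ ψ : BForm} :
    BTruth G V w (φ.and ψ) ↔ BTruth G V w φ ∧ BTruth G V w ψ := by
  simp only [BForm.and, btruth_neg, btruth_imp]; tauto

@[simp] theorem btruth_dia {i : Fin 2} {φ : BForm} :
    BTruth G V w (.dia i φ) ↔ ∃ v, G.R i w v ∧ BTruth G V v φ := by
  simp [BForm.dia]

end Semantics

@[simp] theorem utruth_dia {F : Frame1} {V : ℕ → F.W → Prop} {w : F.W} {φ : UForm} :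
    UTruth F V w φ.dia ↔ ∃ v, F.R w v ∧ UTruth F V v φ := by
  simp [UForm.dia, UForm.neg, UTruth]

def UForm.and (φ ψ : UForm) : UForm := .neg (.imp φ ψ.neg)

@[simp] theorem utruth_and {F : Frame1} {V : ℕ → F.W → Prop} {w : F.W} {φ ψ : UForm} :
    UTruth F V w (φ.and ψ) ↔ UTruth F V w φ ∧ UTruth F V w ψ := by
  simp only [UForm.and, UForm.neg, UTruth]; tauto

def Frame2.component (G : Frame2) (i : Fin 2) : Frame1 := ⟨G.W, G.ne, G.R i⟩

theorem btruth_embed (G : Frame2) (i : Fin 2) (V : ℕ → G.W → Prop) (φ : UForm) (w : G.W) :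
    BTruth G V w (φ.embed i) ↔ UTruth (G.component i) V w φ := by
  induction φ generalizing w with
  | var n => rfl
  | bot => rfl
  | imp φ ψ ihφ ihψ => exact imp_congr (ihφ w) (ihψ w)
  | box φ ih => exact forall_congr' fun v => imp_congr Iff.rfl (ih v)

theorem bValid_embed_iff {G : Frame2} {i : Fin 2} {φ : UForm} :
    BValid G (φ.embed i) ↔ UValid (G.component i) φ := by
  simp only [BValid, UValid, btruth_embed]; rfl

def w3 : UForm :=
  let p := UForm.var 0
  let q := UForm.var 1
  .imp p.dia <| .imp q.dia <| .imp (p.and q).dia.neg <| .imp (p.and q.dia).dia.neg (q.and p.dia).dia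

theorem uValid_w3_iff {F : Frame1} : UValid F w3 ↔ WeaklyConnected F.R := by
  constructor
  · intro h x y z hxy hxz
    by_contra! hne
    have := h (fun n v => if n = 0 then v = y else v = z) x
    simp only [w3, UForm.neg, UTruth, utruth_dia, ↓reduceIte, exists_eq_right, one_ne_zero,
      utruth_and, exists_eq_right_right, imp_false, not_and, ↓existsAndEq, true_and] at this
    exact hne.2.2 (this hxy hxz (fun _ h => hne.1 h.symm) (fun _ => hne.2.1)).2
  · intro h V x
    simp only [w3, UTruth, UForm.neg, utruth_dia, utruth_and]
    rintro ⟨y, hxy, hy⟩ ⟨z, hxz, hz⟩ hyz hyRz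
    rcases h x y z hxy hxz with rfl | hRyz | hRzy
    · exact (hyz ⟨y, hxy, hy, hz⟩).elim
    · exact (hyRz ⟨y, hxy, hy, z, hRyz, hz⟩).elim
    · exact ⟨z, hxz, hz, y, hRzy, hy⟩

theorem Lcom.of_bValid {G : Frame2} (h : BValid G lcomAx) : Lcom G :=
  fun x y z hxy hyz =>
    h (fun _ v => ∃ u, G.R 1 x u ∧ G.R 0 u v) x (fun u hu v hv => ⟨u, hu, hv⟩) y hxy z hyz

theorem Rcom.of_bValid {G : Frame2} (h : BValid G rcomAx) : Rcom G :=
  fun x y z hxy hyz =>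
    h (fun _ v => ∃ u, G.R 0 x u ∧ G.R 1 u v) x (fun u hu v hv => ⟨u, hu, hv⟩) y hxy z hyz

theorem Conf.of_bValid {G : Frame2} (h : BValid G confAx) : Conf G := by
  intro x y z hxy hxz
  have := h (fun _ v => G.R 1 z v) x
  simp only [confAx, btruth_imp, btruth_dia, btruth_box] at this
  exact this ⟨z, hxz, fun _ => id⟩ y hxy

theorem subset_smallestLogic (S : Set BForm) : S ⊆ SmallestLogic S :=
  fun _ hφ => Set.mem_sInter.mpr fun _ hL => hL.2 hφ

section Commutator

variable {L0 L1 : Set UForm}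

theorem embed_mem_commutator_left {φ : UForm} (hφ : φ ∈ L0) : φ.embed 0 ∈ Commutator L0 L1 :=
  subset_smallestLogic _ (.inl (.inl ⟨φ, hφ, rfl⟩))

theorem lcomAx_mem_commutator : lcomAx ∈ Commutator L0 L1 :=
  subset_smallestLogic _ (.inr (by simp))

theorem rcomAx_mem_commutator : rcomAx ∈ Commutator L0 L1 :=
  subset_smallestLogic _ (.inr (by simp))

theorem confAx_mem_commutator : confAx ∈ Commutator L0 L1 :=
  subset_smallestLogic _ (.inr (by simp))

end Commutator

theorem w3_mem_logicK3 : w3 ∈ LogicK3 := fun _ hF => uValid_w3_iff.2 hF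

structure IsK3CommFrame (G : Frame2) : Prop where
  weaklyConnected : WeaklyConnected (G.R 0)
  lcom : Lcom G
  rcom : Rcom G
  conf : Conf G

theorem IsK3CommFrame.of_frameFor {G : Frame2} {L : Set BForm} {L1 : Set UForm}
    (hL : Commutator LogicK3 L1 ⊆ L) (hG : FrameFor G L) : IsK3CommFrame G where
  weaklyConnected := uValid_w3_iff.1 <| bValid_embed_iff.1 <|
    hG _ (hL (embed_mem_commutator_left w3_mem_logicK3))
  lcom := .of_bValid (hG _ (hL lcomAx_mem_commutator))
  rcom := .of_bValid (hG _ (hL rcomAx_mem_commutator))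
  conf := .of_bValid (hG _ (hL confAx_mem_commutator))

section Chains

variable {α : Type*} {R : α → α → Prop}

def HasChain (R : α → α → Prop) : ℕ → α → Prop
  | 0, _ => True
  | k + 1, x => ∃ y, R x y ∧ HasChain R k y

def HasDepth (R : α → α → Prop) (k : ℕ) (x : α) : Prop :=
  HasChain R k x ∧ ¬ HasChain R (k + 1) x

theorem HasChain.of_succ : ∀ {k : ℕ} {x : α}, HasChain R (k + 1) x → HasChain R k x
  | 0, _, _ => trivial
  | _ + 1, _, ⟨y, hxy, hy⟩ => ⟨y, hxy, hy.of_succ⟩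

theorem HasChain.mono {j k : ℕ} (hjk : j ≤ k) {x : α} (h : HasChain R k x) : HasChain R j x := by
  induction hjk with
  | refl => exact h
  | step _ ih => exact ih h.of_succ

theorem HasDepth.unique {i j : ℕ} {x : α} (hi : HasDepth R i x) (hj : HasDepth R j x) : i = j := by
  by_contra hne
  rcases Nat.lt_or_gt_of_ne hne with h | h
  · exact hi.2 (hj.1.mono h)
  · exact hj.2 (hi.1.mono h)

theorem HasChain.of_simulation {S : α → α → Prop}
    (hS : ∀ x y x', S x y → R x x' → ∃ y', R y y' ∧ S x' y') :
    ∀ {k : ℕ} {x y : α}, S x y → HasChain R k x → HasChain R k y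
  | 0, _, _, _, _ => trivial
  | _ + 1, x, y, hxy, ⟨x', hxx', hx'⟩ =>
    let ⟨y', hyy', hx'y'⟩ := hS x y x' hxy hxx'
    ⟨y', hyy', of_simulation hS hx'y' hx'⟩

end Chains

theorem hasChain_iff_of_R1 {G : Frame2} (hr : Rcom G) (hc : Conf G) {k : ℕ} {x y : G.W}
    (hxy : G.R 1 x y) : HasChain (G.R 0) k x ↔ HasChain (G.R 0) k y :=
  ⟨HasChain.of_simulation hc hxy,
    HasChain.of_simulation (S := flip (G.R 1)) (fun y x _ => hr x y _) hxy⟩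

theorem hasDepth_iff_of_R1 {G : Frame2} (hr : Rcom G) (hc : Conf G) {k : ℕ} {x y : G.W}
    (hxy : G.R 1 x y) : HasDepth (G.R 0) k x ↔ HasDepth (G.R 0) k y := by
  simp only [HasDepth, hasChain_iff_of_R1 hr hc hxy]

/-- `◇₀□₀⊥ ∧ □₀◇₁t ∧ □₁(◇₀t → ◇₀A) ∧ □₁(◇₀A → ◇₀(A ∧ □₀¬A)) ∧ □₀□₁X ∧ □₁□₀□₀X`
with `A = ¬t ∧ ◇₀t` and `X = t → □₀(¬t ∧ ¬◇₀t)`. -/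
def psi : BForm :=
  let t := BForm.var 0
  let A := t.neg.and (.dia 0 t)
  let X := t.imp (.box 0 (t.neg.and (BForm.dia 0 t).neg))
  (BForm.dia 0 (.box 0 .bot)).and <| (BForm.box 0 (.dia 1 t)).and <|
    (BForm.box 1 ((BForm.dia 0 t).imp (.dia 0 A))).and <|
    (BForm.box 1 ((BForm.dia 0 A).imp (.dia 0 (A.and (.box 0 A.neg))))).and <|
    (BForm.box 0 (.box 1 X)).and (.box 1 (.box 0 (.box 0 X)))

section Psi

variable (G : Frame2) (t : G.W → Prop)

def JustAbove (x : G.W) : Prop := ¬ t x ∧ ∃ y, G.R 0 x y ∧ t y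

def Isolated (x : G.W) : Prop := t x → ∀ y, G.R 0 x y → ¬ t y ∧ ¬ ∃ z, G.R 0 y z ∧ t z

structure SatPsi (a : G.W) : Prop where
  exists_deadEnd : ∃ w, G.R 0 a w ∧ ∀ y, ¬ G.R 0 w y
  exists_t : ∀ w, G.R 0 a w → ∃ u, G.R 1 w u ∧ t u
  exists_justAbove : ∀ σ, G.R 1 a σ → (∃ u, G.R 0 σ u ∧ t u) → ∃ x, G.R 0 σ x ∧ JustAbove G t x
  exists_minimal : ∀ σ, G.R 1 a σ → (∃ x, G.R 0 σ x ∧ JustAbove G t x) →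
    ∃ x, G.R 0 σ x ∧ JustAbove G t x ∧ ∀ s, G.R 0 x s → ¬ JustAbove G t s
  isolated_of_R0_R1 : ∀ w, G.R 0 a w → ∀ u, G.R 1 w u → Isolated G t u
  isolated_of_R1_R0_R0 : ∀ σ, G.R 1 a σ → ∀ x, G.R 0 σ x → ∀ s, G.R 0 x s → Isolated G t s

end Psi

theorem btruth_psi_iff {G : Frame2} {V : ℕ → G.W → Prop} {a : G.W} :
    BTruth G V a psi ↔ SatPsi G (V 0) a := by
  simp only [psi, btruth_and, btruth_dia, btruth_box, btruth_imp, btruth_neg]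
  exact ⟨fun ⟨h1, h2, h3, h4, h5, h6⟩ => ⟨h1, h2, h3, h4, h5, h6⟩,
    fun ⟨h1, h2, h3, h4, h5, h6⟩ => ⟨h1, h2, h3, h4, h5, h6⟩⟩

namespace SatPsi

variable {G : Frame2} {t : G.W → Prop} {a : G.W}

theorem exists_hasDepth_succ (hψ : SatPsi G t a) (hG : IsK3CommFrame G) {k : ℕ} {w : G.W}
    (haw : G.R 0 a w) (hw : HasDepth (G.R 0) k w) :
    ∃ w', G.R 0 a w' ∧ HasDepth (G.R 0) (k + 1) w' := by
  obtain ⟨u, hwu, htu⟩ := hψ.exists_t w haw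
  have hu : HasDepth (G.R 0) k u := (hasDepth_iff_of_R1 hG.rcom hG.conf hwu).1 hw
  obtain ⟨σ, haσ, hσu⟩ := hG.lcom a w u haw hwu
  obtain ⟨x, hσx, ⟨hntx, hxt⟩, hxmin⟩ :=
    hψ.exists_minimal σ haσ (hψ.exists_justAbove σ haσ ⟨u, hσu, htu⟩)
  have hxu : G.R 0 x u := by
    rcases hG.weaklyConnected σ x u hσx hσu with rfl | hxu | hux
    · exact absurd htu hntx
    · exact hxu
    · exact absurd hxt (hψ.isolated_of_R0_R1 w haw u hwu htu x hux).2
  have hx : HasDepth (G.R 0) (k + 1) x := by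
    refine ⟨⟨u, hxu, hu.1⟩, fun ⟨s, hxs, hs⟩ => ?_⟩
    rcases hG.weaklyConnected x s u hxs hxu with rfl | hsu | hus
    · exact hu.2 hs
    · by_cases hts : t s
      · exact (hψ.isolated_of_R1_R0_R0 σ haσ x hσx s hxs hts u hsu).1 htu
      · exact hxmin s hxs ⟨hts, u, hsu, htu⟩
    · exact hu.2 ⟨s, hus, hs.of_succ⟩
  obtain ⟨w', haw', hw'x⟩ := hG.rcom a σ x haσ hσx
  exact ⟨w', haw', (hasDepth_iff_of_R1 hG.rcom hG.conf hw'x).2 hx⟩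

theorem exists_hasDepth (hψ : SatPsi G t a) (hG : IsK3CommFrame G) (k : ℕ) :
    ∃ w, G.R 0 a w ∧ HasDepth (G.R 0) k w := by
  induction k with
  | zero =>
    obtain ⟨w, haw, hw⟩ := hψ.exists_deadEnd
    exact ⟨w, haw, trivial, fun ⟨y, hwy, _⟩ => hw y hwy⟩
  | succ k ih =>
    obtain ⟨w, haw, hw⟩ := ih
    exact hψ.exists_hasDepth_succ hG haw hw

theorem infinite (hψ : SatPsi G t a) (hG : IsK3CommFrame G) : Infinite G.W := by
  choose f _ hf using hψ.exists_hasDepth hG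
  exact .of_injective f fun i j hij => (hf i).unique (hij ▸ hf j)

end SatPsi

section Staircase

variable {F : Frame1} {e : ℕ → F.W}

def staircase (e : ℕ → F.W) : WithTop ℕ × F.W → Prop
  | (x, v) => ∃ n : ℕ, x = n ∧ v = e n

theorem staircase_column (he : Function.Injective e) {x : WithTop ℕ} {m : ℕ} :
    staircase e (x, e m) ↔ x = m := by
  simp [staircase, he.eq_iff]

theorem isolated_staircase (he : Function.Injective e) (p : WithTop ℕ × F.W) :
    Isolated (prodFrame omegaSuccGt F) (staircase e) p := by
  obtain ⟨_, _⟩ := p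
  rintro ⟨n, rfl, rfl⟩ (⟨x, v⟩ : WithTop ℕ × F.W) ⟨hxn, rfl⟩
  replace hxn : x < n := hxn
  refine ⟨fun hx => hxn.ne ((staircase_column he).1 hx), ?_⟩
  rintro ⟨(⟨y, _⟩ : WithTop ℕ × F.W), ⟨hyx, rfl⟩, hy⟩
  exact (lt_trans hyx hxn).ne ((staircase_column he).1 hy)

theorem justAbove_staircase (he : Function.Injective e) (m : ℕ) :
    JustAbove (prodFrame omegaSuccGt F) (staircase e) (((m + 1 : ℕ) : WithTop ℕ), e m) :=
  ⟨fun h => by simpa using (staircase_column he).1 h,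
    ((m : WithTop ℕ), e m), ⟨WithTop.coe_lt_coe.2 m.lt_succ_self, rfl⟩, m, rfl, rfl⟩

theorem not_justAbove_of_R0_staircase (he : Function.Injective e) (m : ℕ) (s : WithTop ℕ × F.W)
    (hs : (prodFrame omegaSuccGt F).R 0 (((m + 1 : ℕ) : WithTop ℕ), e m) s) :
    ¬ JustAbove (prodFrame omegaSuccGt F) (staircase e) s := by
  obtain ⟨j, _⟩ := s
  obtain ⟨hj, rfl⟩ := hs
  rintro ⟨hjm, (⟨i, _⟩ : WithTop ℕ × F.W), ⟨hij, rfl⟩, hi⟩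
  replace hj : j < (m + 1 : ℕ) := hj
  replace hij : i < j := hij
  rw [staircase_column he] at hi hjm
  subst hi
  lift j to ℕ using (hj.trans (WithTop.coe_lt_top _)).ne
  simp only [ENat.some_eq_natCast, Nat.cast_lt, Nat.cast_inj] at hj hij hjm
  omega

theorem satPsi_staircase (he : Function.Injective e) {r : F.W} (hr : ∀ n, F.R r (e n)) :
    SatPsi (prodFrame omegaSuccGt F) (staircase e) ((⊤ : WithTop ℕ), r) where
  exists_deadEnd := by
    refine ⟨(((0 : ℕ) : WithTop ℕ), r), ⟨WithTop.coe_lt_top 0, rfl⟩, ?_⟩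
    rintro (⟨y, _⟩ : WithTop ℕ × F.W) ⟨hy, -⟩
    exact not_lt_bot (α := WithTop ℕ) hy
  exists_t := by
    rintro (⟨x, _⟩ : WithTop ℕ × F.W) ⟨hx, rfl⟩
    lift x to ℕ using (hx : x < ⊤).ne
    exact ⟨((x : WithTop ℕ), e x), ⟨hr x, rfl⟩, x, rfl, rfl⟩
  exists_justAbove := by
    rintro ⟨_, _⟩ ⟨-, rfl⟩ ⟨⟨_, _⟩, ⟨-, rfl⟩, m, rfl, rfl⟩
    exact ⟨(((m + 1 : ℕ) : WithTop ℕ), e m), ⟨WithTop.coe_lt_top _, rfl⟩,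
      justAbove_staircase he m⟩
  exists_minimal := by
    rintro ⟨_, _⟩ ⟨-, rfl⟩ ⟨⟨_, _⟩, ⟨-, rfl⟩, -, ⟨_, _⟩, ⟨-, rfl⟩, m, rfl, rfl⟩
    exact ⟨(((m + 1 : ℕ) : WithTop ℕ), e m), ⟨WithTop.coe_lt_top _, rfl⟩,
      justAbove_staircase he m, not_justAbove_of_R0_staircase he m⟩
  isolated_of_R0_R1 _ _ p _ := isolated_staircase he p
  isolated_of_R1_R0_R0 _ _ _ _ p _ := isolated_staircase he p

end Staircase

theorem OneStepRooted.exists_injective_succ {F : Frame1} (h : OneStepRooted F)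
    (hinf : Infinite F.W) :
    ∃ (r : F.W) (e : ℕ → F.W), Function.Injective e ∧ ∀ n, F.R r (e n) := by
  obtain ⟨r, hr⟩ := h
  let E := (Set.finite_singleton r).infinite_compl.natEmbedding
  exact ⟨r, fun n => E n, Subtype.val_injective.comp E.injective, fun n => hr _ (E n).2⟩

theorem no_fmp_of_K3_K_general (L : Set BForm)
    (hcomm : Commutator LogicK3 LogicK ⊆ L)
    (F : Frame1) (hinf : Infinite F.W)
    (hroot : OneStepRooted F)
    (hfr : FrameFor (prodFrame omegaSuccGt F) L) :
    ¬ HasFMP L := by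
  intro hfmp
  obtain ⟨r, e, he, hr⟩ := hroot.exists_injective_succ hinf
  have hψ : BTruth (prodFrame omegaSuccGt F) (fun _ => staircase e) ((⊤ : WithTop ℕ), r) psi :=
    btruth_psi_iff.2 (satPsi_staircase he hr)
  obtain ⟨G, hfin, hG, V, a, ha⟩ := hfmp psi.neg fun h => hfr _ h _ _ hψ
  have hGψ : SatPsi G (V 0) a := btruth_psi_iff.1 (not_not.1 ha)
  exact not_finite_iff_infinite.2 (hGψ.infinite (.of_frameFor hcomm hG)) hfin

/-- **Theorem 1 (Kurucz).** If `L` is a normal bimodal logic containing the commutator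
`[K3, K]`, and the product frame `(ω+1, >) × F` is a frame for `L` for some countably
infinite one-step rooted frame `F`, then `L` does not have the finite model property. -/
theorem no_fmp_of_K3_K (L : Set BForm) (hL : IsLogic L)
    (hcomm : Commutator LogicK3 LogicK ⊆ L)
    (F : Frame1) (hcount : Countable F.W) (hinf : Infinite F.W)
    (hroot : OneStepRooted F)
    (hfr : FrameFor (prodFrame omegaSuccGt F) L) :
    ¬ HasFMP L :=
  no_fmp_of_K3_K_general L hcomm F hinf hroot hfr
end

section
/- Let F be a countably infinite one-step rooted frame. Then the formula φ∞ is satisfiable in the product 2-frame (ω+1,>) × F, i.e., φ∞ holds at some point of some model based on (ω+1,>) × F. In fact, if r,y0,y1,... enumerates the domain of F with root r, then the valuation making p true exactly at the points (n, y_n) for n < ω satisfies φ∞ at the point (ω, r). -/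
set_option linter.unusedVariables false

/-! ### The formula `φ∞` -/

/-- The propositional variable `p`. -/
def pV : BForm := .var 0

/-- The formula `φ∞`: the conjunction of
`◇1◇0(p ∧ □0⊥)`,
`□1(◇0 p → ◇0(◇0 p ∧ □0□0¬p))`, and
`□0(◇1(◇0 p ∧ □0□0¬p) → ◇1(p ∧ □0¬p ∧ □0□0¬p))`. -/
def phiInf : BForm :=
  .and (.dia 1 (.dia 0 (.and pV (.box 0 .bot))))
    (.and
      (.box 1 (.imp (.dia 0 pV)
        (.dia 0 (.and (.dia 0 pV) (.box 0 (.box 0 (.neg pV)))))))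
      (.box 0 (.imp
        (.dia 1 (.and (.dia 0 pV) (.box 0 (.box 0 (.neg pV)))))
        (.dia 1 (.and pV (.and (.box 0 (.neg pV)) (.box 0 (.box 0 (.neg pV)))))))))

/- In the column of `y n` the variable `p` holds exactly at height `n`. So from `(ω, r)` the
root sees the column of `y 0`, whose point at height `0` is a dead end satisfying `p`; every
column containing a `p`-point `(n, y n)` has the point `(n + 1, y n)` with `p` one step and
nowhere two steps below it; and every point `(k, r)` below `(ω, r)` sees `(k, y k)`, a
`p`-point with no `p` below it. -/

section Semantics

variable {F : Frame2} {V : ℕ → F.W → Prop} {w : F.W} {i : Fin 2} {φ ψ : BForm}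

theorem bTruth_and : BTruth F V w (φ.and ψ) ↔ BTruth F V w φ ∧ BTruth F V w ψ := by
  simp only [BForm.and, BForm.neg, BTruth]
  tauto

theorem bTruth_dia : BTruth F V w (.dia i φ) ↔ ∃ v, F.R i w v ∧ BTruth F V v φ := by
  simp [BForm.dia, BForm.neg, BTruth]

end Semantics

section Product

variable {F0 F1 : Frame1} {V : ℕ → (prodFrame F0 F1).W → Prop} {a : F0.W} {b : F1.W}
  {φ : BForm}

theorem bTruth_prodFrame_box_zero :
    BTruth (prodFrame F0 F1) V (a, b) (.box 0 φ) ↔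
      ∀ a', F0.R a a' → BTruth (prodFrame F0 F1) V (a', b) φ :=
  ⟨fun h a' ha => h (a', b) ⟨ha, rfl⟩, fun h => by
    rintro ⟨a', b'⟩ ⟨ha, rfl⟩
    exact h a' ha⟩

theorem bTruth_prodFrame_box_one :
    BTruth (prodFrame F0 F1) V (a, b) (.box 1 φ) ↔
      ∀ b', F1.R b b' → BTruth (prodFrame F0 F1) V (a, b') φ :=
  ⟨fun h b' hb => h (a, b') ⟨hb, rfl⟩, fun h => by
    rintro ⟨a', b'⟩ ⟨hb, rfl⟩
    exact h b' hb⟩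

theorem bTruth_prodFrame_dia_zero :
    BTruth (prodFrame F0 F1) V (a, b) (.dia 0 φ) ↔
      ∃ a', F0.R a a' ∧ BTruth (prodFrame F0 F1) V (a', b) φ := by
  refine bTruth_dia.trans ⟨?_, fun ⟨a', ha, h⟩ => ⟨(a', b), ⟨ha, rfl⟩, h⟩⟩
  rintro ⟨⟨a', b'⟩, ⟨ha, rfl⟩, h⟩
  exact ⟨a', ha, h⟩

theorem bTruth_prodFrame_dia_one :
    BTruth (prodFrame F0 F1) V (a, b) (.dia 1 φ) ↔
      ∃ b', F1.R b b' ∧ BTruth (prodFrame F0 F1) V (a, b') φ := by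
  refine bTruth_dia.trans ⟨?_, fun ⟨b', hb, h⟩ => ⟨(a, b'), ⟨hb, rfl⟩, h⟩⟩
  rintro ⟨⟨a', b'⟩, ⟨hb, rfl⟩, h⟩
  exact ⟨b', hb, h⟩

end Product

section Diagonal

variable {F : Frame1} {y : ℕ → F.W} {V : ℕ → (prodFrame omegaSuccGt F).W → Prop}

def IsDiagonalValuation (y : ℕ → F.W) (V : ℕ → (prodFrame omegaSuccGt F).W → Prop) :
    Prop :=
  ∀ a : (prodFrame omegaSuccGt F).W, V 0 a ↔ ∃ n : ℕ, a.1 = (n : WithTop ℕ) ∧ a.2 = y n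

theorem bTruth_pV_column (hinj : Function.Injective y) (hV : IsDiagonalValuation y V)
    {a : WithTop ℕ} {n : ℕ} :
    BTruth (prodFrame omegaSuccGt F) V (a, y n) pV ↔ a = n := by
  refine (hV (a, y n)).trans ⟨fun ⟨m, ha, hm⟩ => ?_, fun ha => ⟨n, ha, rfl⟩⟩
  rwa [hinj hm]

theorem bTruth_box_zero_neg_pV_column (hinj : Function.Injective y)
    (hV : IsDiagonalValuation y V) {a : WithTop ℕ} {n : ℕ} (ha : a ≤ n) :
    BTruth (prodFrame omegaSuccGt F) V (a, y n) (.box 0 (.neg pV)) := by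
  refine bTruth_prodFrame_box_zero.2 fun (b : WithTop ℕ) (hb : b < a) hp => ?_
  rw [bTruth_pV_column hinj hV] at hp
  exact (hp ▸ hb).not_ge ha

theorem bTruth_box_zero_box_zero_neg_pV_column (hinj : Function.Injective y)
    (hV : IsDiagonalValuation y V) {a : WithTop ℕ} {n : ℕ} (ha : a ≤ (n + 1 : ℕ)) :
    BTruth (prodFrame omegaSuccGt F) V (a, y n) (.box 0 (.box 0 (.neg pV))) := by
  refine bTruth_prodFrame_box_zero.2 fun (b : WithTop ℕ) (hb : b < a) => ?_
  replace hb := hb.trans_le ha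
  lift b to ℕ using (hb.trans (WithTop.coe_lt_top _)).ne
  exact bTruth_box_zero_neg_pV_column hinj hV
    (WithTop.coe_le_coe.2 (Nat.lt_succ_iff.1 (WithTop.coe_lt_coe.1 hb)))

theorem bTruth_dia_one_dia_zero_pV_deadEnd {r : F.W} (hry : ∀ n, F.R r (y n))
    (hinj : Function.Injective y) (hV : IsDiagonalValuation y V) :
    BTruth (prodFrame omegaSuccGt F) V ((⊤ : WithTop ℕ), r)
      (.dia 1 (.dia 0 (.and pV (.box 0 .bot)))) :=
  bTruth_prodFrame_dia_one.2 ⟨y 0, hry 0, bTruth_prodFrame_dia_zero.2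
    ⟨((0 : ℕ) : WithTop ℕ), WithTop.coe_lt_top 0,
      bTruth_and.2 ⟨(bTruth_pV_column hinj hV).2 rfl,
      bTruth_prodFrame_box_zero.2 fun (_ : WithTop ℕ) hb => not_lt_bot hb⟩⟩⟩

theorem bTruth_top_dia_zero_pV_imp (hinj : Function.Injective y)
    (hV : IsDiagonalValuation y V) (w : F.W) :
    BTruth (prodFrame omegaSuccGt F) V ((⊤ : WithTop ℕ), w)
      (.imp (.dia 0 pV) (.dia 0 (.and (.dia 0 pV) (.box 0 (.box 0 (.neg pV)))))) := by
  intro hp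
  obtain ⟨a, -, hpa⟩ := bTruth_prodFrame_dia_zero.1 hp
  obtain ⟨n, rfl, rfl⟩ := (hV _).1 hpa
  refine bTruth_prodFrame_dia_zero.2 ⟨((n + 1 : ℕ) : WithTop ℕ), WithTop.coe_lt_top _,
    bTruth_and.2 ⟨?_, bTruth_box_zero_box_zero_neg_pV_column hinj hV le_rfl⟩⟩
  exact bTruth_prodFrame_dia_zero.2
    ⟨(n : WithTop ℕ), WithTop.coe_lt_coe.2 n.lt_succ_self, (bTruth_pV_column hinj hV).2 rfl⟩

theorem bTruth_dia_one_pV_isolated {r : F.W} (hry : ∀ n, F.R r (y n))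
    (hinj : Function.Injective y) (hV : IsDiagonalValuation y V) (k : ℕ) :
    BTruth (prodFrame omegaSuccGt F) V ((k : WithTop ℕ), r)
      (.dia 1 (.and pV (.and (.box 0 (.neg pV)) (.box 0 (.box 0 (.neg pV)))))) :=
  bTruth_prodFrame_dia_one.2 ⟨y k, hry k, bTruth_and.2 ⟨(bTruth_pV_column hinj hV).2 rfl,
    bTruth_and.2 ⟨bTruth_box_zero_neg_pV_column hinj hV le_rfl,
      bTruth_box_zero_box_zero_neg_pV_column hinj hV (WithTop.coe_le_coe.2 k.le_succ)⟩⟩⟩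

theorem bTruth_top_phiInf {r : F.W} (hry : ∀ n, F.R r (y n)) (hinj : Function.Injective y)
    (hV : IsDiagonalValuation y V) :
    BTruth (prodFrame omegaSuccGt F) V ((⊤ : WithTop ℕ), r) phiInf := by
  refine bTruth_and.2 ⟨bTruth_dia_one_dia_zero_pV_deadEnd hry hinj hV, bTruth_and.2
    ⟨bTruth_prodFrame_box_one.2 fun w _ => bTruth_top_dia_zero_pV_imp hinj hV w, ?_⟩⟩
  refine bTruth_prodFrame_box_zero.2 fun (a : WithTop ℕ) (ha : a < ⊤) _ => ?_
  lift a to ℕ using ha.ne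
  exact bTruth_dia_one_pV_isolated hry hinj hV a

end Diagonal

theorem phiInf_sat_in_product_general (F : Frame1)
    (r : F.W) (hroot : ∀ w : F.W, w ≠ r → F.R r w)
    (y : ℕ → F.W) (hinj : Function.Injective y) (hner : ∀ n, y n ≠ r) :
    (∃ V w, BTruth (prodFrame omegaSuccGt F) V w phiInf) ∧
    ∀ V : ℕ → (prodFrame omegaSuccGt F).W → Prop,
      (∀ a : (prodFrame omegaSuccGt F).W,
        V 0 a ↔ ∃ n : ℕ, a.1 = (n : WithTop ℕ) ∧ a.2 = y n) →
      BTruth (prodFrame omegaSuccGt F) V ((⊤ : WithTop ℕ), r) phiInf := by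
  have hry : ∀ n, F.R r (y n) := fun n => hroot _ (hner n)
  exact ⟨⟨fun _ a => ∃ n : ℕ, a.1 = (n : WithTop ℕ) ∧ a.2 = y n, _,
    bTruth_top_phiInf hry hinj fun _ => Iff.rfl⟩,
    fun _ hV => bTruth_top_phiInf hry hinj hV⟩

/-- **Lemma 2.** If `F` is a countably infinite one-step rooted frame, then `φ∞` is
satisfiable in `(ω+1, >) × F`; in fact, if `r, y 0, y 1, …` enumerates the domain of `F`
(with root `r`), then under any valuation making `p` true exactly at the points
`(n, y n)` for `n < ω`, the formula `φ∞` holds at `(ω, r)`. -/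
theorem phiInf_sat_in_product (F : Frame1)
    (hcount : Countable F.W) (hinf : Infinite F.W)
    (r : F.W) (hroot : ∀ w : F.W, w ≠ r → F.R r w)
    (y : ℕ → F.W) (hinj : Function.Injective y) (hner : ∀ n, y n ≠ r)
    (hsurj : ∀ w : F.W, w = r ∨ ∃ n, w = y n) :
    (∃ V w, BTruth (prodFrame omegaSuccGt F) V w phiInf) ∧
    ∀ V : ℕ → (prodFrame omegaSuccGt F).W → Prop,
      (∀ a : (prodFrame omegaSuccGt F).W,
        V 0 a ↔ ∃ n : ℕ, a.1 = (n : WithTop ℕ) ∧ a.2 = y n) →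
      BTruth (prodFrame omegaSuccGt F) V ((⊤ : WithTop ℕ), r) phiInf :=
  phiInf_sat_in_product_general F r hroot y hinj hner
end

section
/- Let M be a model based on a 2-frame (W,R0,R1). If R0 is transitive, then the tick-relation R̄0^M is transitive, R̄0^M ⊆ R0, and R̄0^M absorbs R0 on both sides: if xR0y and y R̄0^M z then x R̄0^M z, and if x R̄0^M y and yR0z then x R̄0^M z. -/
set_option linter.unusedVariables false

/-! ### The tick trick -/

/-- The fixed propositional variable `t`. -/
def tV : BForm := .var 1

/-- The tick-relation `R̄0^M`: `x R̄0^M y` iff there is `z` with `x R0 z`, the truth value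
of `t` flips from `x` to `z`, and `z = y` or `z R0 y`. -/
def tickRel (F : Frame2) (V : ℕ → F.W → Prop) (x y : F.W) : Prop :=
  ∃ z, F.R 0 x z ∧ (BTruth F V x tV ↔ ¬ BTruth F V z tV) ∧ (z = y ∨ F.R 0 z y)

/-- The defined diamond
`◆0ψ = [t → ◇0(¬t ∧ (ψ ∨ ◇0ψ))] ∧ [¬t → ◇0(t ∧ (ψ ∨ ◇0ψ))]`. -/
def blackDia (ψ : BForm) : BForm :=
  .and (.imp tV (.dia 0 (.and (.neg tV) (.or ψ (.dia 0 ψ)))))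
    (.imp (.neg tV) (.dia 0 (.and tV (.or ψ (.dia 0 ψ)))))

/-- The defined box `■0ψ = ¬◆0¬ψ`. -/
def blackBox (ψ : BForm) : BForm := .neg (blackDia (.neg ψ))

/-- The tick axiom `(t ∨ ◇1 t → t ∧ □1 t) ∧ □0(t ∨ ◇1 t → t ∧ □1 t)`. -/
def tickAx : BForm :=
  .and (.imp (.or tV (.dia 1 tV)) (.and tV (.box 1 tV)))
    (.box 0 (.imp (.or tV (.dia 1 tV)) (.and tV (.box 1 tV))))

theorem Transitive.rel_of_rel_of_eq_or_rel {α : Type*} {R : α → α → Prop} (hR : Transitive R)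
    {x y z : α} (hxy : R x y) : y = z ∨ R y z → R x z
  | .inl rfl => hxy
  | .inr hyz => hR hxy hyz

theorem Transitive.rel_of_eq_or_rel_of_rel {α : Type*} {R : α → α → Prop} (hR : Transitive R)
    {x y z : α} (hxy : x = y ∨ R x y) (hyz : R y z) : R x z := by
  rcases hxy with rfl | hxy
  exacts [hyz, hR hxy hyz]

namespace tickRel

variable {F : Frame2} {V : ℕ → F.W → Prop} {x y z : F.W}

theorem rel (ht : Transitive (F.R 0)) (h : tickRel F V x y) : F.R 0 x y :=
  let ⟨_, hxw, _, hwy⟩ := h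
  ht.rel_of_rel_of_eq_or_rel hxw hwy

theorem of_tickRel_of_rel (ht : Transitive (F.R 0)) (hxy : tickRel F V x y) (hyz : F.R 0 y z) :
    tickRel F V x z :=
  let ⟨w, hxw, hflip, hwy⟩ := hxy
  ⟨w, hxw, hflip, .inr (ht.rel_of_eq_or_rel_of_rel hwy hyz)⟩

theorem of_rel_of_tickRel (ht : Transitive (F.R 0)) (hxy : F.R 0 x y) (hyz : tickRel F V y z) :
    tickRel F V x z := by
  obtain ⟨w, hyw, hflip, hwz⟩ := hyz
  by_cases hxw : BTruth F V x tV ↔ ¬ BTruth F V w tV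
  · exact ⟨w, ht hxy hyw, hxw, hwz⟩
  · -- `t` agrees at `x` and `w` but flips from `y` to `w`, so it flips from `x` to `y`.
    exact ⟨y, hxy, by tauto, .inr (ht.rel_of_rel_of_eq_or_rel hyw hwz)⟩

theorem transitive (ht : Transitive (F.R 0)) : Transitive (tickRel F V) :=
  fun _ _ _ hxy hyz => of_rel_of_tickRel ht (hxy.rel ht) hyz

end tickRel

/-- **Claim 1.** If `R0` is transitive, then the tick-relation `R̄0^M` is transitive,
is contained in `R0`, and absorbs `R0` on both sides. -/
theorem tickRel_trans_of_trans (F : Frame2) (V : ℕ → F.W → Prop)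
    (ht : Transitive (F.R 0)) :
    Transitive (tickRel F V) ∧
    (∀ x y, tickRel F V x y → F.R 0 x y) ∧
    (∀ x y z, F.R 0 x y → tickRel F V y z → tickRel F V x z) ∧
    (∀ x y z, tickRel F V x y → F.R 0 y z → tickRel F V x z) :=
  ⟨tickRel.transitive ht, fun _ _ => tickRel.rel ht, fun _ _ _ => tickRel.of_rel_of_tickRel ht,
    fun _ _ _ => tickRel.of_tickRel_of_rel ht⟩
end

section
/- Let M be a model based on a 2-frame (W,R0,R1). If R0 is transitive and weakly connected, then the tick-relation R̄0^M satisfies the weak-connectedness-like property (wcon⁻): for all x,y,z, if x R̄0^M y and x R̄0^M z, then y R̄0^M z, or z R̄0^M y, or (for all w, y R̄0^M w iff z R̄0^M w). -/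
set_option linter.unusedVariables false

/-! By transitivity every tick-successor is an `R0`-successor, so weak connectedness compares
`y` and `z`, say `y R0 z`. If `t` changes its value from `y` to `z`, then `y` ticks to `z`;
otherwise `y` and `z` have the same tick-successors, unless a tick-witness of `y` lies strictly
between `y` and `z`, which again makes `y` tick to `z`. -/

def Tick {α : Type*} (R : α → α → Prop) (p : α → Prop) (x y : α) : Prop :=
  ∃ z, R x z ∧ (p x ↔ ¬ p z) ∧ (z = y ∨ R z y)

namespace Tick

variable {α : Type*} {R : α → α → Prop} {p : α → Prop} {x y z w : α}

theorem rel_of_transitive (ht : Transitive R) (h : Tick R p x y) : R x y := by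
  obtain ⟨z, hxz, -, rfl | hzy⟩ := h
  · exact hxz
  · exact ht hxz hzy

theorem of_rel (hxy : R x y) (hflip : p x ↔ ¬ p y) : Tick R p x y :=
  ⟨y, hxy, hflip, Or.inl rfl⟩

theorem of_rel_of_tick (ht : Transitive R) (hyz : R y z) (hp : p y ↔ p z)
    (h : Tick R p z w) : Tick R p y w := by
  obtain ⟨s, hzs, hflip, hsw⟩ := h
  exact ⟨s, ht hyz hzs, hp.trans hflip, hsw⟩

theorem of_rel_of_not_tick (hwc : WeaklyConnected R) (hyz : R y z) (hp : p y ↔ p z)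
    (hnot : ¬ Tick R p y z) (h : Tick R p y w) : Tick R p z w := by
  obtain ⟨s, hys, hflip, hsw⟩ := h
  rcases hwc y z s hyz hys with rfl | hzs | hsz
  · exact (iff_not_self (hp.symm.trans hflip)).elim
  · exact ⟨s, hzs, hp.symm.trans hflip, hsw⟩
  · exact absurd ⟨s, hys, hflip, Or.inr hsz⟩ hnot

theorem or_forall_iff_of_rel (ht : Transitive R) (hwc : WeaklyConnected R) (hyz : R y z) :
    Tick R p y z ∨ ∀ w, Tick R p y w ↔ Tick R p z w := by
  by_cases hnot : Tick R p y z
  · exact Or.inl hnot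
  have hp : p y ↔ p z := by
    by_contra hne
    exact hnot (of_rel hyz (by tauto))
  exact Or.inr fun w => ⟨of_rel_of_not_tick hwc hyz hp hnot, of_rel_of_tick ht hyz hp⟩

theorem wcon_minus (ht : Transitive R) (hwc : WeaklyConnected R)
    (hy : Tick R p x y) (hz : Tick R p x z) :
    Tick R p y z ∨ Tick R p z y ∨ ∀ w, Tick R p y w ↔ Tick R p z w := by
  rcases hwc x y z (hy.rel_of_transitive ht) (hz.rel_of_transitive ht) with rfl | hyz | hzy
  · exact Or.inr (Or.inr fun _ => Iff.rfl)
  · rcases or_forall_iff_of_rel ht hwc hyz with h | h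
    · exact Or.inl h
    · exact Or.inr (Or.inr h)
  · rcases or_forall_iff_of_rel ht hwc hzy with h | h
    · exact Or.inr (Or.inl h)
    · exact Or.inr (Or.inr fun w => (h w).symm)

end Tick

theorem tickRel_eq_tick (F : Frame2) (V : ℕ → F.W → Prop) :
    tickRel F V = Tick (F.R 0) (fun w => BTruth F V w tV) :=
  rfl

/-- **Claim 2.** If `R0` is transitive and weakly connected, then the tick-relation
`R̄0^M` satisfies the property (wcon⁻). -/
theorem tickRel_wcon (F : Frame2) (V : ℕ → F.W → Prop)
    (ht : Transitive (F.R 0)) (hwc : WeaklyConnected (F.R 0)) :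
    ∀ x y z, tickRel F V x y → tickRel F V x z →
      tickRel F V y z ∨ tickRel F V z y ∨
        (∀ w, tickRel F V y w ↔ tickRel F V z w) := by
  rw [tickRel_eq_tick]
  exact fun _ _ _ => Tick.wcon_minus ht hwc
end
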